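/- Let Z_i be the BEC polarization process starting at Z_0, assume P{min(Z_i,1-Z_i) > 2^{-2^{i/24}}} ≤ C·2^{-i/4} for all i and some constant C, set n = ⌈5·log₂(1/ε)⌉ for 0 < ε < 1, and let τ = min({ j : min(Z_j, 1-Z_j) ≤ ε·2^{-n} } ∪ {n}). Then E[τ] = O(log log(1/ε)) as ε → 0. -/

import Mathlib

open MeasureTheory
open scoped ENNReal

/-!
Write `L = log₂(1/ε)`, so `n ≤ 6L` and the pruning threshold is `ε·2^{-n} = 2^{-(L+n)} ≥ 2^{-7L}`.
At depth `i = ⌈24·log₂(7L)⌉` the assumed tail threshold satisfies `2^{-2^{i/24}} ≤ 2^{-7L}`, so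
`{τ > i}` lies in the tail event at depth `i`. As `τ ≤ n`, this gives `E[τ] ≤ i + n·C·2^{-i/4}`,
and `2^{i/4} ≥ (7L)^6 ≥ n·C` once `L ≥ 6C`; hence `E[τ] ≤ i + 1 = O(log L)`.
-/

open Real

lemma le_two_rpow_natCeil_mul_logb_div {x c : ℝ} (hx : 0 < x) (hc : 0 < c) :
    x ≤ 2 ^ ((⌈c * logb 2 x⌉₊ : ℝ) / c) := by
  have hlog : logb 2 x ≤ (⌈c * logb 2 x⌉₊ : ℝ) / c := by
    rw [le_div_iff₀ hc, mul_comm]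
    exact Nat.le_ceil _
  calc x = 2 ^ logb 2 x := (rpow_logb (by norm_num) (by norm_num) hx).symm
    _ ≤ _ := rpow_le_rpow_of_exponent_le (by norm_num) hlog

lemma lintegral_natCast_le_add_mul_measure_lt {Ω : Type*} [MeasurableSpace Ω] (μ : Measure Ω)
    [IsProbabilityMeasure μ] {τ : Ω → ℕ} {n : ℕ} (hτ : ∀ ω, τ ω ≤ n) (m : ℕ) :
    ∫⁻ ω, (τ ω : ℝ≥0∞) ∂μ ≤ m + n * μ {ω | m < τ ω} := by
  have hpt : ∀ ω, (τ ω : ℝ≥0∞) ≤ m + {ω | m < τ ω}.indicator (fun _ ↦ (n : ℝ≥0∞)) ω := by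
    intro ω
    by_cases h : m < τ ω
    · rw [Set.indicator_of_mem (show ω ∈ {ω | m < τ ω} from h)]
      exact (Nat.cast_le.2 (hτ ω)).trans le_add_self
    · exact (Nat.cast_le.2 (not_lt.1 h)).trans le_self_add
  calc ∫⁻ ω, (τ ω : ℝ≥0∞) ∂μ
      ≤ ∫⁻ ω, (m + {ω | m < τ ω}.indicator (fun _ ↦ (n : ℝ≥0∞)) ω) ∂μ := lintegral_mono hpt
    _ = m + ∫⁻ ω, {ω | m < τ ω}.indicator (fun _ ↦ (n : ℝ≥0∞)) ω ∂μ := by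
      rw [lintegral_add_left measurable_const, lintegral_const, measure_univ, mul_one]
    _ ≤ m + n * μ {ω | m < τ ω} := by gcongr; exact lintegral_indicator_const_le _ _

lemma lt_logb_one_div_of_lt_two_rpow_neg {M ε : ℝ} (hε : 0 < ε) (h : ε < 2 ^ (-M)) :
    M < logb 2 (1 / ε) := by
  rw [lt_logb_iff_rpow_lt (by norm_num) (by positivity), one_div, ← inv_inv ((2 : ℝ) ^ M),
    ← rpow_neg (by norm_num)]
  exact inv_strictAnti₀ hε h

lemma mul_two_rpow_neg_eq_two_rpow_neg_logb_add {ε : ℝ} (hε : 0 < ε) (x : ℝ) :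
    ε * 2 ^ (-x) = 2 ^ (-(logb 2 (1 / ε) + x)) := by
  rw [neg_add, rpow_add (by norm_num), ← logb_inv, one_div, inv_inv,
    rpow_logb (by norm_num) (by norm_num) hε]

noncomputable def pruningDepth (L : ℝ) : ℕ := ⌈24 * logb 2 (7 * L)⌉₊

section PruningDepth

variable {L : ℝ} {n : ℕ}

lemma le_two_rpow_pruningDepth_div (hL : 0 < L) : 7 * L ≤ 2 ^ ((pruningDepth L : ℝ) / 24) :=
  le_two_rpow_natCeil_mul_logb_div (by positivity) (by norm_num)

lemma two_rpow_neg_two_rpow_pruningDepth_le (hL : 0 < L) (hn : (n : ℝ) ≤ 6 * L) :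
    (2 : ℝ) ^ (-(2 : ℝ) ^ ((pruningDepth L : ℝ) / 24)) ≤ 2 ^ (-(L + n)) := by
  have h7L := le_two_rpow_pruningDepth_div (by linarith : 0 < L)
  exact rpow_le_rpow_of_exponent_le (by norm_num) (by linarith)

lemma mul_two_rpow_neg_pruningDepth_le_one {C : ℝ} (hC : 0 ≤ C) (hCL : 6 * C ≤ L)
    (hL : 1 ≤ L) (hn : (n : ℝ) ≤ 6 * L) :
    n * (C * 2 ^ (-(pruningDepth L : ℝ) / 4)) ≤ 1 := by
  set i := pruningDepth L
  have h7L := le_two_rpow_pruningDepth_div (by linarith : 0 < L)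
  have hsix : (2 : ℝ) ^ ((i : ℝ) / 4) = ((2 : ℝ) ^ ((i : ℝ) / 24)) ^ 6 := by
    rw [← rpow_natCast, ← rpow_mul (by norm_num)]
    ring_nf
  have hgrowth : (7 * L) ^ 6 ≤ (2 : ℝ) ^ ((i : ℝ) / 4) := by
    rw [hsix]
    exact pow_le_pow_left₀ (by positivity) h7L 6
  have hnC : n * C ≤ L ^ 2 := by nlinarith
  have hL26 : L ^ 2 ≤ L ^ 6 := pow_le_pow_right₀ hL (by norm_num)
  rw [neg_div, rpow_neg (by norm_num), ← mul_assoc, ← div_eq_mul_inv,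
    div_le_one (by positivity)]
  nlinarith

lemma pruningDepth_add_one_le (hL : 2 ≤ L) :
    (pruningDepth L : ℝ) + 1 ≤ 100 * logb 2 L := by
  have hlog7 : logb 2 7 ≤ 3 := by
    rw [logb_le_iff_le_rpow (by norm_num) (by norm_num)]
    norm_num
  have hlogL : 1 ≤ logb 2 L := by
    rw [le_logb_iff_rpow_le (by norm_num) (by linarith)]
    simpa using hL
  have hceil : (pruningDepth L : ℝ) < 24 * logb 2 (7 * L) + 1 :=
    Nat.ceil_lt_add_one (by have := logb_nonneg one_lt_two (by linarith : 1 ≤ 7 * L); positivity)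
  have hsplit : logb 2 (7 * L) = logb 2 7 + logb 2 L := logb_mul (by norm_num) (by linarith)
  linarith

end PruningDepth

/-- Core complexity theorem for pruned polar codes over the BEC.  For the BEC polarization
process `Z_i` satisfying `P{min(Z_i,1-Z_i) > 2^{-2^{i/24}}} ≤ C·2^{-i/4}` for all `i`, with
`n = ⌈5·log₂(1/ε)⌉` and stopping time
`τ = min({j : min(Z_j, 1-Z_j) ≤ ε·2^{-n}} ∪ {n})`, we have `E[τ] = O(log log (1/ε))`
as `ε → 0`. -/
theorem pruned_expected_stopping_loglog :
    ∀ C : ℝ, 0 < C → ∃ K ε₀ : ℝ, 0 < K ∧ 0 < ε₀ ∧ ε₀ < 1 ∧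
      ∀ ε : ℝ, 0 < ε → ε < ε₀ →
      ∀ (Ω : Type) (mΩ : MeasurableSpace Ω) (μ : Measure Ω), IsProbabilityMeasure μ →
      ∀ Z : ℕ → Ω → ℝ, (∀ i, Measurable (Z i)) →
      (∀ i ω, Z i ω ∈ Set.Icc (0 : ℝ) 1) →
      (∀ i ω, Z (i + 1) ω = 2 * Z i ω - (Z i ω) ^ 2 ∨ Z (i + 1) ω = (Z i ω) ^ 2) →
      (∀ i : ℕ,
        μ {ω | min (Z i ω) (1 - Z i ω) > (2 : ℝ) ^ (-(2 : ℝ) ^ ((i : ℝ) / 24))} ≤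
          ENNReal.ofReal (C * 2 ^ (-(i : ℝ) / 4))) →
      ∀ τ : Ω → ℕ,
      (∀ ω, τ ω = sInf ({j | min (Z j ω) (1 - Z j ω) ≤
          ε * 2 ^ (-(⌈5 * Real.logb 2 (1 / ε)⌉₊ : ℝ))} ∪ {⌈5 * Real.logb 2 (1 / ε)⌉₊})) →
      ∫⁻ ω, (τ ω : ℝ≥0∞) ∂μ ≤ ENNReal.ofReal (K * Real.logb 2 (Real.logb 2 (1 / ε))) := by
  intro C hC
  refine ⟨100, 2 ^ (-max 2 (6 * C)), by norm_num, by positivity,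
    rpow_lt_one_of_one_lt_of_neg (by norm_num) (by simp), ?_⟩
  intro ε hε hε₀ Ω _ μ _ Z _ _ _ htail τ hτ
  set L := logb 2 (1 / ε)
  have hL : max 2 (6 * C) < L := lt_logb_one_div_of_lt_two_rpow_neg hε hε₀
  have hL2 : 2 ≤ L := (le_max_left _ _).trans hL.le
  have hCL : 6 * C ≤ L := (le_max_right _ _).trans hL.le
  set n := ⌈5 * L⌉₊
  have hn : (n : ℝ) ≤ 6 * L := by linarith [Nat.ceil_lt_add_one (by linarith : 0 ≤ 5 * L)]
  set i := pruningDepth L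
  have hτn : ∀ ω, τ ω ≤ n := fun ω ↦ hτ ω ▸ Nat.sInf_le (Set.mem_union_right _ rfl)
  have hlate : {ω | i < τ ω} ⊆
      {ω | min (Z i ω) (1 - Z i ω) > (2 : ℝ) ^ (-(2 : ℝ) ^ ((i : ℝ) / 24))} := by
    intro ω hω
    rw [Set.mem_ofPred_eq, hτ ω] at hω
    have hnotStopped := Nat.notMem_of_lt_sInf hω
    simp only [Set.mem_union, Set.mem_ofPred_eq, not_or, not_le] at hnotStopped
    rw [mul_two_rpow_neg_eq_two_rpow_neg_logb_add hε] at hnotStopped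
    exact (two_rpow_neg_two_rpow_pruningDepth_le (by linarith) hn).trans_lt hnotStopped.1
  calc ∫⁻ ω, (τ ω : ℝ≥0∞) ∂μ ≤ i + n * μ {ω | i < τ ω} :=
        lintegral_natCast_le_add_mul_measure_lt μ hτn i
    _ ≤ ENNReal.ofReal i + ENNReal.ofReal n * ENNReal.ofReal (C * 2 ^ (-(i : ℝ) / 4)) := by
        rw [ENNReal.ofReal_natCast, ENNReal.ofReal_natCast]
        gcongr
        exact (measure_mono hlate).trans (htail i)
    _ = ENNReal.ofReal (i + n * (C * 2 ^ (-(i : ℝ) / 4))) := by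
        rw [← ENNReal.ofReal_mul (by positivity), ← ENNReal.ofReal_add (by positivity)
          (by positivity)]
    _ ≤ ENNReal.ofReal (100 * logb 2 L) := by
        gcongr
        linarith [mul_two_rpow_neg_pruningDepth_le_one hC.le hCL (by linarith) hn,
          pruningDepth_add_one_le hL2]
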